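/- arXiv:math/0703156 — 2 statements merged into one kernel-verified Lean document; each statement's English description precedes it below -/
import Mathlib

section
/- Let P ⊆ ℝⁿ be a uniformly discrete set of finite local complexity and let φ : ℝⁿ → ℝⁿ be a differentiable function whose derivative map dφ is P-equivariant with range R > 0. Then for all r > 0 and all x, y ∈ ℝⁿ: if B_{R+r}[P − x] = B_{R+r}[P − y], then for all h ∈ B(0,r), φ(x + h) − φ(x) = φ(y + h) − φ(y). -/
open Metric Set

noncomputable section

/-- Euclidean space ℝⁿ. -/
abbrev Euc (n : ℕ) := EuclideanSpace ℝ (Fin n)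

/-- The translate `P - x = {p - x : p ∈ P}`. -/
def shiftSet {n : ℕ} (P : Set (Euc n)) (x : Euc n) : Set (Euc n) :=
  (fun p => p - x) '' P

/-- The `r`-patch of `P` around `x`: `B_r[P - x] = B(0,r) ∩ (P - x)`. -/
def patch {n : ℕ} (P : Set (Euc n)) (r : ℝ) (x : Euc n) : Set (Euc n) :=
  ball (0 : Euc n) r ∩ shiftSet P x

/-- `P` is uniformly discrete: there is a positive minimal distance between points. -/
def UnifDiscrete {n : ℕ} (P : Set (Euc n)) : Prop :=
  ∃ δ > 0, ∀ p ∈ P, ∀ q ∈ P, p ≠ q → δ ≤ ‖p - q‖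

/-- `P` is relatively dense: every ball of radius `R` contains a point of `P`. -/
def RelDense {n : ℕ} (P : Set (Euc n)) : Prop :=
  ∃ R > 0, ∀ x : Euc n, ∃ p ∈ P, ‖p - x‖ < R

/-- `P` has finite local complexity: for each `r > 0`, only finitely many `r`-patches
around points of `P`. -/
def FLC {n : ℕ} (P : Set (Euc n)) : Prop :=
  ∀ r > 0, {s : Set (Euc n) | ∃ x ∈ P, s = patch P r x}.Finite

/-- `f` is `P`-equivariant with range `R`. -/
def EquivRange {n : ℕ} {F : Type*} (P : Set (Euc n)) (R : ℝ) (f : Euc n → F) : Prop :=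
  ∀ x y : Euc n, patch P R x = patch P R y → f x = f y

/-- `f` is strongly `P`-equivariant: `P`-equivariant with some finite range `R > 0`. -/
def StrongEquiv {n : ℕ} {F : Type*} (P : Set (Euc n)) (f : Euc n → F) : Prop :=
  ∃ R > 0, EquivRange P R f

/-- `f`, viewed as a function on the subset `Q`, is `P`-equivariant with range `R`. -/
def EquivRangeOn {n : ℕ} {F : Type*} (P Q : Set (Euc n)) (R : ℝ) (f : Euc n → F) : Prop :=
  ∀ x ∈ Q, ∀ y ∈ Q, patch P R x = patch P R y → f x = f y

/-- `f`, viewed as a function on the subset `Q`, is strongly `P`-equivariant. -/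
def StrongEquivOn {n : ℕ} {F : Type*} (P Q : Set (Euc n)) (f : Euc n → F) : Prop :=
  ∃ R > 0, EquivRangeOn P Q R f

/-- `Q` is locally derivable from `P`. -/
def LocallyDerivable {n : ℕ} (P Q : Set (Euc n)) : Prop :=
  ∃ R > 0, ∀ x y : Euc n, patch P R x = patch P R y →
    ({0} : Set (Euc n)) ∩ shiftSet Q x = ({0} : Set (Euc n)) ∩ shiftSet Q y

/-- Hypothesis (H): for every `r > 0` there is `r' > 0` such that for all `x`,
`B(φ(x), r) ∩ φ(P) ⊆ φ(B(x, r') ∩ P)`. -/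
def HypoH {n : ℕ} (P : Set (Euc n)) (φ : Euc n → Euc n) : Prop :=
  ∀ r > 0, ∃ r' > 0, ∀ x : Euc n, ball (φ x) r ∩ (φ '' P) ⊆ φ '' (ball x r' ∩ P)

/-- The pattern metric `D` on closed subsets of ℝⁿ. -/
def patternDist {n : ℕ} (A B : Set (Euc n)) : ℝ :=
  sInf {ε : ℝ | 0 < ε ∧ Metric.hausdorffDist
    ((ball (0 : Euc n) (1 / ε) ∩ A) ∪ sphere (0 : Euc n) (1 / ε))
    ((ball (0 : Euc n) (1 / ε) ∩ B) ∪ sphere (0 : Euc n) (1 / ε)) ≤ ε}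

/-- A continuous `f : ℝⁿ → ℝⁿ` is weakly `P`-equivariant if it is uniformly approximated
by strongly `P`-equivariant continuous functions. -/
def WeakEquiv {n : ℕ} (P : Set (Euc n)) (f : Euc n → Euc n) : Prop :=
  ∀ ε > 0, ∃ g : Euc n → Euc n, Continuous g ∧ StrongEquiv P g ∧ ∀ x : Euc n, ‖f x - g x‖ < ε

/-- `P` is aperiodic: the only translation fixing `P` is `0`. -/
def IsAperiodicSet {n : ℕ} (P : Set (Euc n)) : Prop :=
  ∀ x : Euc n, shiftSet P x = P → x = 0

/-! The derivative of `z ↦ φ (x + z) - φ (y + z)` is `dφ (x + z) - dφ (y + z)`, which vanishes on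
`B(0, r)` because a common `(R + r)`-patch around `x` and `y` yields a common `R`-patch around
`x + z` and `y + z`. So this difference is constant on the ball. -/

lemma mem_patch_iff {n : ℕ} {P : Set (Euc n)} {R : ℝ} {x z : Euc n} :
    z ∈ patch P R x ↔ ‖z‖ < R ∧ z + x ∈ P := by
  simp only [patch, shiftSet, mem_inter_iff, mem_ball_zero_iff, mem_image,
    sub_eq_iff_eq_add, exists_eq_right]

lemma patch_add_subset_patch_add {n : ℕ} {P : Set (Euc n)} {R r : ℝ} {x y v : Euc n}
    (hv : ‖v‖ < r) (hxy : patch P (R + r) x ⊆ patch P (R + r) y) :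
    patch P R (x + v) ⊆ patch P R (y + v) := by
  intro z hz
  rw [mem_patch_iff] at hz ⊢
  have hzv : z + v ∈ patch P (R + r) x :=
    mem_patch_iff.mpr ⟨(norm_add_le z v).trans_lt (add_lt_add hz.1 hv),
      by rw [add_assoc, add_comm v]; exact hz.2⟩
  have hzvy := (mem_patch_iff.mp (hxy hzv)).2
  rw [add_assoc, add_comm v] at hzvy
  exact ⟨hz.1, hzvy⟩

lemma patch_add_eq_patch_add {n : ℕ} {P : Set (Euc n)} {R r : ℝ} {x y v : Euc n}
    (hv : ‖v‖ < r) (hxy : patch P (R + r) x = patch P (R + r) y) :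
    patch P R (x + v) = patch P R (y + v) :=
  (patch_add_subset_patch_add hv hxy.subset).antisymm (patch_add_subset_patch_add hv hxy.ge)

lemma Differentiable.add_sub_eq_add_sub_of_fderiv_add_eq {E F : Type*} [NormedAddCommGroup E]
    [NormedSpace ℝ E] [NormedAddCommGroup F] [NormedSpace ℝ F] {φ : E → F}
    (hφ : Differentiable ℝ φ) {x y : E} {r : ℝ}
    (hdφ : ∀ z ∈ ball (0 : E) r, fderiv ℝ φ (x + z) = fderiv ℝ φ (y + z))
    {h : E} (hh : h ∈ ball (0 : E) r) :
    φ (x + h) - φ x = φ (y + h) - φ y := by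
  have hdiff (a : E) : DifferentiableOn ℝ (fun z ↦ φ (a + z)) (ball 0 r) := fun z _ ↦
    ((differentiableAt_comp_add_left a).mpr (hφ (a + z))).differentiableWithinAt
  obtain ⟨c, hc⟩ := isOpen_ball.exists_eq_add_of_fderiv_eq (convex_ball _ _).isPreconnected
    (hdiff x) (hdiff y) fun z hz ↦ by simp only [fderiv_comp_add_left, hdφ z hz]
  have hxh : φ (x + h) = φ (y + h) + c := hc hh
  have hx : φ x = φ y + c := by simpa using hc (mem_ball_self (pos_of_mem_ball hh))
  rw [hxh, hx, add_sub_add_right_eq_sub]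

theorem stmt6_general {n : ℕ} (P : Set (Euc n))
    (φ : Euc n → Euc n) (hφ : Differentiable ℝ φ)
    (R : ℝ) (hdφ : EquivRange P R (fderiv ℝ φ)) :
    ∀ r > 0, ∀ x y : Euc n, patch P (R + r) x = patch P (R + r) y →
      ∀ h ∈ ball (0 : Euc n) r, φ (x + h) - φ x = φ (y + h) - φ y := by
  intro r _ x y hxy h hh
  exact hφ.add_sub_eq_add_sub_of_fderiv_add_eq
    (fun z hz ↦ hdφ _ _ (patch_add_eq_patch_add (mem_ball_zero_iff.mp hz) hxy)) hh

theorem stmt6 {n : ℕ} (P : Set (Euc n)) (hUD : UnifDiscrete P) (hFLC : FLC P)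
    (φ : Euc n → Euc n) (hφ : Differentiable ℝ φ)
    (R : ℝ) (hR : 0 < R) (hdφ : EquivRange P R (fderiv ℝ φ)) :
    ∀ r > 0, ∀ x y : Euc n, patch P (R + r) x = patch P (R + r) y →
      ∀ h ∈ ball (0 : Euc n) r, φ (x + h) - φ x = φ (y + h) - φ y :=
  stmt6_general P φ hφ R hdφ
end
end

section
/- Let P ⊆ ℝⁿ be a Delone set of finite local complexity and let φ : ℝⁿ → ℝⁿ be a C¹ map which satisfies Hypothesis (H) for P and whose derivative map dφ is strongly P-equivariant. Then the map sending P − x to φ(P) − φ(x) is uniformly continuous with respect to the pattern metric D: for every ε > 0 there exists δ > 0 such that for all x, y ∈ ℝⁿ, D(P − x, P − y) < δ implies D(φ(P) − φ(x), φ(P) − φ(y)) < ε. -/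
open Metric Set

noncomputable section

/-! Closeness of `P - x` and `P - y` in the pattern metric means that large patches of `P` around
`x` and `y` agree up to a small translation `z`: finite local complexity makes this rigid, because
the differences `p - q` of bounded length form a finite, hence uniformly discrete, set. As `dφ` is
equivariant, `φ (x + t) - φ x = φ (y + z + t) - φ (y + z)` on a large ball, and Hypothesis (H)
turns this into agreement of the large patches of `φ(P)` around `φ x` and `φ (y + z)`. Finally `φ`
is Lipschitz (an equivariant continuous function only takes the values it takes on finitely many
compact balls), so `φ (y + z)` is close to `φ y`. -/

open scoped Pointwise Topology

theorem finite_of_isBounded_of_forall_le_dist {X : Type*} [MetricSpace X] [ProperSpace X]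
    {S : Set X} {δ : ℝ} (hS : Bornology.IsBounded S) (hδ : 0 < δ)
    (hsep : ∀ p ∈ S, ∀ q ∈ S, p ≠ q → δ ≤ dist p q) : S.Finite := by
  obtain ⟨t, htS, ht, hcover⟩ := finite_approx_of_totallyBounded
    (hS.isCompact_closure.totallyBounded.subset subset_closure) δ hδ
  refine ht.subset fun p hp => ?_
  obtain ⟨q, hq, hpq⟩ := mem_iUnion₂.1 (hcover hp)
  by_contra hpt
  exact (hsep p hp q (htS hq) (ne_of_mem_of_not_mem hq hpt).symm).not_gt (mem_ball.1 hpq)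

theorem Set.Finite.exists_pos_forall_le_dist {X : Type*} [MetricSpace X] {S : Set X}
    (hS : S.Finite) : ∃ γ > 0, ∀ u ∈ S, ∀ v ∈ S, u ≠ v → γ ≤ dist u v := by
  have hT : (S ×ˢ S ∩ {p | p.1 ≠ p.2}).Finite := (hS.prod hS).subset inter_subset_left
  have : ∀ᶠ γ in 𝓝[>] (0 : ℝ), ∀ p ∈ S ×ˢ S ∩ {p | p.1 ≠ p.2}, γ ≤ dist p.1 p.2 :=
    (Filter.eventually_all_finite hT).2 fun p hp =>
      nhdsWithin_le_nhds (eventually_le_nhds (dist_pos.2 hp.2))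
  obtain ⟨γ, hγ, hγpos⟩ := (this.and self_mem_nhdsWithin).exists
  exact ⟨γ, hγpos, fun u hu v hv huv => hγ (u, v) ⟨⟨hu, hv⟩, huv⟩⟩

section Patches

variable {n : ℕ}

theorem mem_shiftSet {P : Set (Euc n)} {x a : Euc n} : a ∈ shiftSet P x ↔ x + a ∈ P := by
  refine ⟨?_, fun h => ⟨x + a, h, add_sub_cancel_left x a⟩⟩
  rintro ⟨p, hp, rfl⟩
  rwa [add_sub_cancel]

theorem mem_patch {P : Set (Euc n)} {r : ℝ} {x a : Euc n} :
    a ∈ patch P r x ↔ ‖a‖ < r ∧ x + a ∈ P := by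
  rw [patch, mem_inter_iff, mem_ball_zero_iff, mem_shiftSet]

theorem patch_add_eq_of_patch_eq {P : Set (Euc n)} {r R : ℝ} {x y : Euc n}
    (h : patch P R x = patch P R y) {v : Euc n} (hv : ‖v‖ + r ≤ R) :
    patch P r (x + v) = patch P r (y + v) := by
  ext a
  simp only [mem_patch]
  refine and_congr_right fun ha => ?_
  have key : ∀ z, v + a ∈ patch P R z ↔ z + v + a ∈ P := fun z => by
    rw [mem_patch, add_assoc]
    exact and_iff_right ((norm_add_le v a).trans_lt (by linarith))
  rw [← key, ← key, h]

theorem UnifDiscrete.finite_patch {P : Set (Euc n)} (hUD : UnifDiscrete P) (r : ℝ) (x : Euc n) :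
    (patch P r x).Finite := by
  obtain ⟨δ, hδ, hsep⟩ := hUD
  refine finite_of_isBounded_of_forall_le_dist (isBounded_ball.subset inter_subset_left) hδ
    fun a ha b hb hab => ?_
  have := hsep _ (mem_patch.1 ha).2 _ (mem_patch.1 hb).2 (by simpa using hab)
  rwa [add_sub_add_left_eq_sub, ← dist_eq_norm] at this

theorem FLC.finite_image_patch {P : Set (Euc n)} (hFLC : FLC P) {r : ℝ} (hr : 0 < r) :
    (patch P r '' P).Finite := by
  convert hFLC r hr using 1
  ext s
  simp [eq_comm]

theorem finite_sub_inter_closedBall {P : Set (Euc n)} (hUD : UnifDiscrete P) (hFLC : FLC P)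
    (ρ : ℝ) : ((P - P) ∩ closedBall 0 ρ).Finite := by
  refine ((hFLC.finite_image_patch (r := |ρ| + 1) (by positivity)).sUnion ?_).subset ?_
  · rintro _ ⟨x, -, rfl⟩
    exact hUD.finite_patch _ x
  · rintro _ ⟨⟨p, hp, q, hq, rfl⟩, hpq⟩
    refine mem_sUnion_of_mem (mem_patch.2 ⟨?_, by rwa [add_sub_cancel]⟩) (mem_image_of_mem _ hq)
    linarith [mem_closedBall_zero_iff.1 hpq, le_abs_self ρ]

theorem EquivRange.exists_norm_le {F : Type*} [NormedAddCommGroup F] {P : Set (Euc n)} {R : ℝ}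
    {f : Euc n → F} (hf : EquivRange P R f) (hfc : Continuous f) (hRD : RelDense P)
    (hFLC : FLC P) : ∃ C, ∀ u, ‖f u‖ ≤ C := by
  obtain ⟨Rd, hRd, hdense⟩ := hRD
  obtain ⟨Q, -, hQ, hQimg⟩ := exists_subset_image_finite_and.1
    ⟨_, subset_rfl, hFLC.finite_image_patch (r := |R| + Rd) (by positivity), rfl⟩
  obtain ⟨C, hC⟩ := (hQ.isCompact_biUnion fun q _ =>
    isCompact_closedBall q Rd).exists_bound_of_continuousOn hfc.continuousOn
  refine ⟨C, fun u => ?_⟩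
  obtain ⟨p, hp, hpu⟩ := hdense u
  obtain ⟨q, hq, hqp⟩ : ∃ q ∈ Q, patch P (|R| + Rd) q = patch P (|R| + Rd) p := by
    rw [← mem_image, ← hQimg]
    exact mem_image_of_mem _ hp
  have hfu : f (q + (u - p)) = f u := by
    have := hf _ _ (patch_add_eq_of_patch_eq hqp (v := u - p)
      (by rw [norm_sub_rev]; linarith [le_abs_self R]))
    rwa [add_sub_cancel] at this
  rw [← hfu]
  refine hC _ (mem_biUnion hq ?_)
  rw [mem_closedBall, dist_eq_norm, add_sub_cancel_left, norm_sub_rev]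
  exact hpu.le

end Patches

section Truncation

variable {E : Type*} [NormedAddCommGroup E]

def truncAt (r : ℝ) (A : Set E) : Set E :=
  (ball 0 r ∩ A) ∪ sphere 0 r

theorem isBounded_truncAt (r : ℝ) (A : Set E) : Bornology.IsBounded (truncAt r A) :=
  (isBounded_ball.subset inter_subset_left).union isBounded_sphere

theorem exists_mem_sphere_dist_eq [NormedSpace ℝ E] [Nontrivial E] {c : E} {r : ℝ}
    (hc : ‖c‖ ≤ r) : ∃ d ∈ sphere (0 : E) r, dist c d = r - ‖c‖ := by
  rcases eq_or_ne c 0 with rfl | hc0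
  · obtain ⟨d, hd⟩ := exists_norm_eq E ((norm_nonneg _).trans hc)
    exact ⟨d, mem_sphere_zero_iff_norm.2 hd, by simp [hd]⟩
  have hc' : 0 < ‖c‖ := norm_pos_iff.2 hc0
  refine ⟨(r / ‖c‖) • c, ?_, ?_⟩
  · rw [mem_sphere_zero_iff_norm, norm_smul,
      Real.norm_of_nonneg (div_nonneg ((norm_nonneg c).trans hc) hc'.le),
      div_mul_cancel₀ _ hc'.ne']
  · rw [dist_comm, dist_eq_norm, show (r / ‖c‖) • c - c = (r / ‖c‖ - 1) • c by
      rw [sub_smul, one_smul], norm_smul,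
      Real.norm_of_nonneg (sub_nonneg.2 ((one_le_div hc').2 hc)), sub_mul,
      div_mul_cancel₀ _ hc'.ne', one_mul]

theorem exists_mem_truncAt_dist_le [NormedSpace ℝ E] {A B : Set E} {r : ℝ} {w : E}
    (hAB : ∀ a ∈ A, a + w ∈ B) {c : E} (hc : c ∈ truncAt r A) :
    ∃ d ∈ truncAt r B, dist c d ≤ ‖w‖ := by
  rcases hc with ⟨hcr, hcA⟩ | hcr
  · rw [mem_ball_zero_iff] at hcr
    by_cases hw : ‖c + w‖ < r
    · exact ⟨c + w, Or.inl ⟨mem_ball_zero_iff.2 hw, hAB c hcA⟩, by simp⟩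
    have hw0 : w ≠ 0 := by
      rintro rfl
      exact hw (by simpa using hcr)
    have : Nontrivial E := ⟨⟨w, 0, hw0⟩⟩
    obtain ⟨d, hd, hcd⟩ := exists_mem_sphere_dist_eq hcr.le
    refine ⟨d, Or.inr hd, ?_⟩
    linarith [norm_add_le c w]
  · exact ⟨c, Or.inr hcr, by simp⟩

theorem hausdorffDist_truncAt_le [NormedSpace ℝ E] {A B : Set E} {r : ℝ} {w : E}
    (hAB : ∀ a ∈ A, a + w ∈ B) (hBA : ∀ b ∈ B, b - w ∈ A) :
    hausdorffDist (truncAt r A) (truncAt r B) ≤ ‖w‖ := by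
  refine hausdorffDist_le_of_mem_dist (norm_nonneg w)
    (fun c hc => exists_mem_truncAt_dist_le hAB hc) fun c hc => ?_
  simpa using exists_mem_truncAt_dist_le (w := -w) (by simpa [← sub_eq_add_neg] using hBA) hc

end Truncation

section PatternMetric

variable {n : ℕ}

theorem patternDist_eq_sInf (A B : Set (Euc n)) : patternDist A B =
    sInf {ε : ℝ | 0 < ε ∧ hausdorffDist (truncAt (1 / ε) A) (truncAt (1 / ε) B) ≤ ε} :=
  rfl

theorem patternDist_comm (A B : Set (Euc n)) : patternDist A B = patternDist B A := by
  simp only [patternDist_eq_sInf, hausdorffDist_comm]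

theorem patternDist_lt_of_hausdorffDist_le {A B : Set (Euc n)} {ε : ℝ} (hε : 0 < ε)
    (h : hausdorffDist (truncAt (2 / ε) A) (truncAt (2 / ε) B) ≤ ε / 2) :
    patternDist A B < ε := by
  have hmem : ε / 2 ∈ {δ : ℝ | 0 < δ ∧
      hausdorffDist (truncAt (1 / δ) A) (truncAt (1 / δ) B) ≤ δ} :=
    ⟨half_pos hε, by rwa [one_div_div]⟩
  exact (csInf_le ⟨0, fun _ hδ => hδ.1.le⟩ hmem).trans_lt (half_lt_self hε)

theorem exists_lt_of_patternDist_lt [Nontrivial (Euc n)] {A B : Set (Euc n)} {δ : ℝ}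
    (h : patternDist A B < δ) :
    ∃ ε, 0 < ε ∧ ε < δ ∧ hausdorffDist (truncAt (1 / ε) A) (truncAt (1 / ε) B) ≤ ε := by
  have hnear : ∀ C D : Set (Euc n), ∀ c ∈ truncAt (1 / 1) C,
      ∃ d ∈ truncAt (1 / 1) D, dist c d ≤ 1 := by
    rintro C D c (⟨hc, -⟩ | hc)
    · obtain ⟨d, hd, hcd⟩ := exists_mem_sphere_dist_eq (mem_ball_zero_iff.1 hc).le
      exact ⟨d, Or.inr hd, by linarith [norm_nonneg c]⟩
    · exact ⟨c, Or.inr hc, by simp⟩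
  have hone : (1 : ℝ) ∈ {ε : ℝ | 0 < ε ∧
      hausdorffDist (truncAt (1 / ε) A) (truncAt (1 / ε) B) ≤ ε} :=
    ⟨one_pos, hausdorffDist_le_of_mem_dist zero_le_one (hnear A B) (hnear B A)⟩
  obtain ⟨ε, ⟨hε, hd⟩, hεδ⟩ := (csInf_lt_iff ⟨0, fun _ hε => hε.1.le⟩ ⟨1, hone⟩).1 h
  exact ⟨ε, hε, hεδ, hd⟩

theorem exists_dist_lt_of_patternDist_lt [Nontrivial (Euc n)] {A B : Set (Euc n)} {δ R : ℝ}
    (hR : R + δ ≤ 1 / δ) (h : patternDist A B < δ) {a : Euc n} (ha : a ∈ A) (haR : ‖a‖ < R) :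
    ∃ b ∈ B, dist a b < δ := by
  obtain ⟨ε, hε, hεδ, hd⟩ := exists_lt_of_patternDist_lt h
  have hδε : 1 / δ < 1 / ε := one_div_lt_one_div_of_lt hε hεδ
  have hsphere : ∀ C : Set (Euc n), (truncAt (1 / ε) C).Nonempty := fun C =>
    (NormedSpace.sphere_nonempty.2 (by positivity)).mono subset_union_right
  have ha' : a ∈ truncAt (1 / ε) A := Or.inl ⟨mem_ball_zero_iff.2 (by linarith), ha⟩
  obtain ⟨b, hb | hb, hab⟩ := exists_dist_lt_of_hausdorffDist_lt ha' (hd.trans_lt hεδ)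
    (hausdorffEDist_ne_top_of_nonempty_of_bounded (hsphere A) (hsphere B)
      (isBounded_truncAt _ _) (isBounded_truncAt _ _))
  · exact ⟨b, hb.2, hab⟩
  · rw [mem_sphere_zero_iff_norm] at hb
    linarith [norm_le_norm_add_norm_sub' b a, dist_eq_norm b a, dist_comm a b]

end PatternMetric

section Matching

variable {n : ℕ}

theorem add_mem_shiftSet_of_forall_dist_lt {P : Set (Euc n)} {x y a₀ b₀ a : Euc n}
    {R ρ γ δ : ℝ}
    (hsep : ∀ u ∈ (P - P) ∩ closedBall 0 ρ, ∀ v ∈ (P - P) ∩ closedBall 0 ρ, u ≠ v → γ ≤ dist u v)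
    (hρ : 2 * R + 2 * δ ≤ ρ) (hγ : 2 * δ ≤ γ)
    (hnear : ∀ a ∈ shiftSet P x, ‖a‖ < R → ∃ b ∈ shiftSet P y, dist a b < δ)
    (ha₀ : a₀ ∈ shiftSet P x) (ha₀R : ‖a₀‖ < R) (hb₀ : b₀ ∈ shiftSet P y)
    (hab₀ : dist a₀ b₀ < δ) (ha : a ∈ shiftSet P x) (haR : ‖a‖ < R) :
    a + (b₀ - a₀) ∈ shiftSet P y := by
  obtain ⟨b, hb, hab⟩ := hnear a ha haR
  have hsub : ∀ {z c c₀ : Euc n}, c ∈ shiftSet P z → c₀ ∈ shiftSet P z → c - c₀ ∈ P - P :=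
    fun {z c c₀} hc hc₀ => by
      simpa only [add_sub_add_left_eq_sub] using
        sub_mem_sub (mem_shiftSet.1 hc) (mem_shiftSet.1 hc₀)
  have hnorm : ∀ {c c' : Euc n}, dist c c' < δ → ‖c'‖ < ‖c‖ + δ := fun {c c'} h => by
    linarith [norm_le_norm_add_norm_sub' c' c, dist_eq_norm c c', norm_sub_rev c c']
  have hdiff : b - b₀ = a - a₀ := by
    by_contra hne
    refine (hsep _ ⟨hsub hb hb₀, ?_⟩ _ ⟨hsub ha ha₀, ?_⟩ hne).not_gt ?_
    · rw [mem_closedBall_zero_iff]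
      linarith [norm_sub_le b b₀, hnorm hab, hnorm hab₀]
    · rw [mem_closedBall_zero_iff]
      linarith [norm_sub_le a a₀, dist_nonneg (x := a) (y := b)]
    · linarith [dist_sub_sub_le b b₀ a a₀, dist_comm a b, dist_comm a₀ b₀]
  have hba : b = a + (b₀ - a₀) := by
    rw [← sub_add_cancel b b₀, hdiff]
    abel
  rwa [← hba]

theorem patch_eq_patch_add_of_forall_mem {P : Set (Euc n)} {x y z : Euc n} {r R : ℝ}
    (hR : r + ‖z‖ ≤ R) (hxy : ∀ a ∈ shiftSet P x, ‖a‖ < R → a + z ∈ shiftSet P y)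
    (hyx : ∀ b ∈ shiftSet P y, ‖b‖ < R → b - z ∈ shiftSet P x) :
    patch P r x = patch P r (y + z) := by
  ext c
  simp only [mem_patch]
  refine and_congr_right fun hc => ?_
  rw [← mem_shiftSet, add_assoc, add_comm z c, ← mem_shiftSet]
  refine ⟨fun h => hxy c h (by linarith [norm_nonneg z]), fun h => ?_⟩
  simpa using hyx _ h (by linarith [norm_add_le c z])

theorem exists_patch_eq_add_of_patternDist_lt {P : Set (Euc n)} (hUD : UnifDiscrete P)
    (hRD : RelDense P) (hFLC : FLC P) (r : ℝ) {η : ℝ} (hη : 0 < η) :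
    ∃ δ > 0, ∀ x y, patternDist (shiftSet P x) (shiftSet P y) < δ →
      ∃ z, ‖z‖ < η ∧ patch P r x = patch P r (y + z) := by
  rcases subsingleton_or_nontrivial (Euc n) with hE | hE
  · exact ⟨1, one_pos, fun x y _ => ⟨0, by simpa using hη, by rw [Subsingleton.elim x (y + 0)]⟩⟩
  obtain ⟨Rd, hRd, hdense⟩ := hRD
  set R := |r| + Rd + 1
  obtain ⟨γ, hγ, hsep⟩ :=
    (finite_sub_inter_closedBall hUD hFLC (2 * R + 2)).exists_pos_forall_le_dist
  -- `R + δ ≤ 1 / δ` lets the pattern metric see the ball of radius `R`, and `2 * δ ≤ γ` lets the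
  -- gap `γ` between short differences of points of `P` upgrade `δ`-closeness to exact matching.
  set δ := min (min 1 η) (min (γ / 2) (1 / (R + 1)))
  have hδ : 0 < δ := by positivity
  have hδ1 : δ ≤ 1 := (min_le_left _ _).trans (min_le_left _ _)
  have hδη : δ ≤ η := (min_le_left _ _).trans (min_le_right _ _)
  have hδγ : δ ≤ γ / 2 := (min_le_right _ _).trans (min_le_left _ _)
  have hR : R + δ ≤ 1 / δ := by
    have : δ ≤ 1 / (R + 1) := (min_le_right _ _).trans (min_le_right _ _)
    rw [le_div_iff₀ (by positivity)] at this ⊢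
    nlinarith
  refine ⟨δ, hδ, fun x y hxy => ?_⟩
  have hyx : patternDist (shiftSet P y) (shiftSet P x) < δ := by rwa [patternDist_comm]
  obtain ⟨p, hp, hpx⟩ := hdense x
  have ha₀ : p - x ∈ shiftSet P x := mem_image_of_mem _ hp
  have ha₀R : ‖p - x‖ < R := by linarith [abs_nonneg r]
  obtain ⟨b₀, hb₀, hab₀⟩ := exists_dist_lt_of_patternDist_lt hR hxy ha₀ ha₀R
  have hz : ‖b₀ - (p - x)‖ < δ := by rwa [norm_sub_rev, ← dist_eq_norm]
  have hb₀R : ‖b₀‖ < R := by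
    linarith [norm_le_norm_add_norm_sub' b₀ (p - x), abs_nonneg r]
  refine ⟨b₀ - (p - x), hz.trans_le hδη, patch_eq_patch_add_of_forall_mem (R := R)
    (by linarith [le_abs_self r]) (fun a ha haR => ?_) fun b hb hbR => ?_⟩
  · exact add_mem_shiftSet_of_forall_dist_lt hsep (by linarith) (by linarith)
      (fun _ => exists_dist_lt_of_patternDist_lt hR hxy) ha₀ ha₀R hb₀ hab₀ ha haR
  · rw [sub_eq_add_neg, neg_sub]
    exact add_mem_shiftSet_of_forall_dist_lt hsep (by linarith) (by linarith)
      (fun _ => exists_dist_lt_of_patternDist_lt hR hyx) hb₀ hb₀R ha₀ (by rwa [dist_comm]) hb hbR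

end Matching

theorem sub_eq_sub_of_fderiv_add_eq {E F : Type*} [NormedAddCommGroup E] [NormedSpace ℝ E]
    [NormedAddCommGroup F] [NormedSpace ℝ F] {f : E → F} (hf : Differentiable ℝ f) {x y : E}
    {ρ : ℝ} (h : ∀ t ∈ ball (0 : E) ρ, fderiv ℝ f (x + t) = fderiv ℝ f (y + t)) {t : E}
    (ht : t ∈ ball (0 : E) ρ) : f (x + t) - f x = f (y + t) - f y := by
  have hx : Differentiable ℝ fun t => f (x + t) := by fun_prop
  have hy : Differentiable ℝ fun t => f (y + t) := by fun_prop
  obtain ⟨c, hc⟩ := isOpen_ball.exists_eq_add_of_fderiv_eq (convex_ball 0 ρ).isPreconnected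
    hx.differentiableOn hy.differentiableOn fun s hs => by
      simpa only [fderiv_comp_add_left] using h s hs
  have h0 : f (x + 0) = f (y + 0) + c := hc (mem_ball_self (pos_of_mem_ball ht))
  have h1 : f (x + t) = f (y + t) + c := hc ht
  rw [add_zero, add_zero] at h0
  rw [h1, h0]
  abel

section ImagePatches

variable {n : ℕ}

theorem exists_lipschitzWith_of_equivRange_fderiv {P : Set (Euc n)} (hRD : RelDense P)
    (hFLC : FLC P) {φ : Euc n → Euc n} (hφ : ContDiff ℝ 1 φ) {R : ℝ}
    (hdφ : EquivRange P R (fderiv ℝ φ)) : ∃ C, LipschitzWith C φ := by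
  obtain ⟨C, hC⟩ := hdφ.exists_norm_le (hφ.continuous_fderiv one_ne_zero) hRD hFLC
  refine ⟨C.toNNReal,
    lipschitzWith_of_nnnorm_fderiv_le (hφ.differentiable one_ne_zero) fun u => ?_⟩
  rw [← NNReal.coe_le_coe, coe_nnnorm]
  exact (hC u).trans (Real.le_coe_toNNReal C)

theorem patch_image_subset_of_patch_eq {P : Set (Euc n)} {φ : Euc n → Euc n}
    (hφ : Differentiable ℝ φ) {R₀ r' r s : ℝ} (hdφ : EquivRange P R₀ (fderiv ℝ φ))
    (hR₀ : 0 ≤ R₀) (hHr : ∀ x, ball (φ x) s ∩ φ '' P ⊆ φ '' (ball x r' ∩ P)) (hr : r' + R₀ ≤ r)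
    {x y : Euc n} (h : patch P r x = patch P r y) :
    patch (φ '' P) s (φ x) ⊆ patch (φ '' P) s (φ y) := by
  intro c hc
  rw [mem_patch] at hc ⊢
  have hφc : φ x + c ∈ ball (φ x) s := by
    rw [mem_ball, dist_eq_norm, add_sub_cancel_left]
    exact hc.1
  obtain ⟨p, ⟨hpx, hp⟩, hpc⟩ := hHr x ⟨hφc, hc.2⟩
  have ht : p - x ∈ ball (0 : Euc n) r' := by rwa [mem_ball_zero_iff, ← dist_eq_norm]
  have hφxy := sub_eq_sub_of_fderiv_add_eq hφ (fun t ht => hdφ _ _ (patch_add_eq_of_patch_eq h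
    (by linarith [mem_ball_zero_iff.1 ht]))) ht
  have hyp : y + (p - x) ∈ P := by
    have hpatch : p - x ∈ patch P r x :=
      mem_patch.2 ⟨(mem_ball_zero_iff.1 ht).trans_le (by linarith), by rwa [add_sub_cancel]⟩
    exact (mem_patch.1 (h ▸ hpatch)).2
  refine ⟨hc.1, y + (p - x), hyp, ?_⟩
  rw [← sub_eq_iff_eq_add', ← hφxy, add_sub_cancel, hpc, add_sub_cancel_left]

theorem patternDist_shiftSet_lt_of_patch_eq {Q : Set (Euc n)} {ε : ℝ} (hε : 0 < ε)
    {a a' b : Euc n} (h : patch Q (2 / ε) a = patch Q (2 / ε) a') (hab : dist a' b ≤ ε / 2) :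
    patternDist (shiftSet Q a) (shiftSet Q b) < ε := by
  refine patternDist_lt_of_hausdorffDist_le hε ?_
  have htrunc : truncAt (2 / ε) (shiftSet Q a) = truncAt (2 / ε) (shiftSet Q a') :=
    congrArg (· ∪ sphere 0 (2 / ε)) h
  rw [htrunc]
  refine (hausdorffDist_truncAt_le (w := a' - b) (fun c hc => ?_) fun c hc => ?_).trans
    (by rwa [← dist_eq_norm])
  · rw [mem_shiftSet] at hc ⊢
    convert hc using 1
    abel
  · rw [mem_shiftSet] at hc ⊢
    convert hc using 1
    abel

end ImagePatches

theorem stmt10 {n : ℕ} (P : Set (Euc n))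
    (hUD : UnifDiscrete P) (hRD : RelDense P) (hFLC : FLC P)
    (φ : Euc n → Euc n) (hφ : ContDiff ℝ 1 φ)
    (hH : HypoH P φ) (hdφ : StrongEquiv P (fderiv ℝ φ)) :
    ∀ ε > 0, ∃ δ > 0, ∀ x y : Euc n,
      patternDist (shiftSet P x) (shiftSet P y) < δ →
      patternDist (shiftSet (φ '' P) (φ x)) (shiftSet (φ '' P) (φ y)) < ε := by
  intro ε hε
  obtain ⟨R₀, hR₀, hdφR⟩ := hdφ
  obtain ⟨C, hC⟩ := exists_lipschitzWith_of_equivRange_fderiv hRD hFLC hφ hdφR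
  obtain ⟨η, hη, hφη⟩ := Metric.uniformContinuous_iff.1 hC.uniformContinuous (ε / 2) (half_pos hε)
  obtain ⟨r', -, hHr⟩ := hH (2 / ε) (by positivity)
  obtain ⟨δ, hδ, hmatch⟩ := exists_patch_eq_add_of_patternDist_lt hUD hRD hFLC (r' + R₀) hη
  refine ⟨δ, hδ, fun x y hxy => ?_⟩
  obtain ⟨z, hz, hpatch⟩ := hmatch x y hxy
  have hφpatch (u v : Euc n) (h : patch P (r' + R₀) u = patch P (r' + R₀) v) :=
    patch_image_subset_of_patch_eq (hφ.differentiable one_ne_zero) hdφR hR₀.le hHr le_rfl h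
  refine patternDist_shiftSet_lt_of_patch_eq hε
    ((hφpatch _ _ hpatch).antisymm (hφpatch _ _ hpatch.symm)) (hφη ?_).le
  simpa using hz
end
end
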